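/- arXiv:2205.09851 — 4 statements merged into one kernel-verified Lean document; each statement's English description precedes it below -/
import Mathlib

section
/- For every sequence (v_k) of vectors in a vector space X equipped with a function ‖·‖: X → [0,∞] satisfying the quasi-triangle inequality ‖v+w‖ ≤ C(‖v‖+‖w‖) for some constant C ≥ 1, there exists a constant C' depending only on C such that for every K ∈ ℕ, ‖∑_{k=1}^K v_k‖ ≤ C' ∑_{k=1}^K k^{C'} ‖v_k‖. -/
open scoped ENNReal NNReal

universe u

/-!
Split `1, …, K` into the dyadic blocks `[2^j, 2^(j+1))`. A block has at most `2^j` elements, so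
halving it repeatedly bounds the quasi-norm of its sum by `C^j` times the sum of the quasi-norms,
while peeling the blocks off one at a time costs `C^(j+1)` for block `j`. The resulting factor
`C^(2j+1)` is polynomial in `k ≥ 2^j`: if `C ≤ N` then `C^(2j+1) ≤ 2N · k^(2N)`.
-/

open Finset

section QuasiTriangle

variable {ι X : Type*} [AddCommMonoid X] {nn : X → ℝ≥0∞} {C : ℝ≥0∞}

theorem quasi_sum_le_pow_mul_sum_of_card_le [DecidableEq ι] (h0 : nn 0 = 0)
    (hQ : ∀ v w : X, nn (v + w) ≤ C * (nn v + nn w)) (v : ι → X) (n : ℕ) (s : Finset ι)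
    (hs : #s ≤ 2 ^ n) : nn (∑ i ∈ s, v i) ≤ C ^ n * ∑ i ∈ s, nn (v i) := by
  induction n generalizing s with
  | zero =>
    rcases (by omega : #s = 0 ∨ #s = 1) with hs | hs
    · simp [card_eq_zero.mp hs, h0]
    · obtain ⟨i, rfl⟩ := card_eq_one.mp hs
      simp
  | succ n ih =>
    rw [pow_succ] at hs
    obtain ⟨t, hts, ht⟩ := exists_subset_card_eq (Nat.div_le_self #s 2)
    have hsdiff : #(s \ t) ≤ 2 ^ n := by rw [card_sdiff_of_subset hts]; omega
    calc nn (∑ i ∈ s, v i) = nn (∑ i ∈ s \ t, v i + ∑ i ∈ t, v i) := by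
          rw [sum_sdiff hts]
      _ ≤ C * (C ^ n * ∑ i ∈ s \ t, nn (v i) + C ^ n * ∑ i ∈ t, nn (v i)) := by
        grw [hQ, ih _ hsdiff, ih t (by omega)]
      _ = C ^ (n + 1) * ∑ i ∈ s, nn (v i) := by rw [← mul_add, sum_sdiff hts, pow_succ']; ring

theorem quasi_sum_range_le_sum_pow (h0 : nn 0 = 0)
    (hQ : ∀ v w : X, nn (v + w) ≤ C * (nn v + nn w)) (n : ℕ) (u : ℕ → X) :
    nn (∑ j ∈ range n, u j) ≤ ∑ j ∈ range n, C ^ (j + 1) * nn (u j) := by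
  induction n generalizing u with
  | zero => simp [h0]
  | succ n ih =>
    calc nn (∑ j ∈ range (n + 1), u j) = nn (∑ j ∈ range n, u (j + 1) + u 0) := by
          rw [sum_range_succ']
      _ ≤ C * (∑ j ∈ range n, C ^ (j + 1) * nn (u (j + 1)) + nn (u 0)) := by
        grw [hQ, ih]
      _ = ∑ j ∈ range (n + 1), C ^ (j + 1) * nn (u j) := by
        rw [sum_range_succ', mul_add, mul_sum]
        simp only [pow_succ', mul_assoc, pow_zero, mul_one]

theorem quasi_sum_Icc_le_sum_pow_log (h0 : nn 0 = 0)
    (hQ : ∀ v w : X, nn (v + w) ≤ C * (nn v + nn w)) (K : ℕ) (v : ℕ → X) :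
    nn (∑ k ∈ Icc 1 K, v k) ≤ ∑ k ∈ Icc 1 K, C ^ (2 * Nat.log 2 k + 1) * nn (v k) := by
  set B : ℕ → Finset ℕ := fun j => {k ∈ Icc 1 K | Nat.log 2 k = j}
  have hmaps : ∀ k ∈ Icc 1 K, Nat.log 2 k ∈ range K := fun k hk => by
    have := Nat.log_lt_self 2 (by grind : k ≠ 0)
    grind
  have hcard (j : ℕ) : #(B j) ≤ 2 ^ j := by
    have hsub : B j ⊆ Ico (2 ^ j) (2 ^ (j + 1)) := fun k hk => by
      obtain ⟨hk, rfl⟩ := mem_filter.mp hk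
      exact mem_Ico.mpr
        ⟨Nat.pow_log_le_self 2 (by grind), Nat.lt_pow_succ_log_self one_lt_two k⟩
    grw [card_le_card hsub, Nat.card_Ico, pow_succ]
    omega
  calc nn (∑ k ∈ Icc 1 K, v k) = nn (∑ j ∈ range K, ∑ k ∈ B j, v k) := by
        rw [sum_fiberwise_of_maps_to hmaps]
    _ ≤ ∑ j ∈ range K, C ^ (j + 1) * (C ^ j * ∑ k ∈ B j, nn (v k)) := by
      grw [quasi_sum_range_le_sum_pow h0 hQ]
      gcongr with j
      exact quasi_sum_le_pow_mul_sum_of_card_le h0 hQ v j _ (hcard j)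
    _ = ∑ j ∈ range K, ∑ k ∈ B j, C ^ (2 * Nat.log 2 k + 1) * nn (v k) := by
      refine sum_congr rfl fun j _ => ?_
      rw [← mul_assoc, mul_sum]
      refine sum_congr rfl fun k hk => ?_
      rw [(mem_filter.mp hk).2]
      ring
    _ = ∑ k ∈ Icc 1 K, C ^ (2 * Nat.log 2 k + 1) * nn (v k) := sum_fiberwise_of_maps_to hmaps _

end QuasiTriangle

theorem pow_two_mul_log_add_one_le {N k : ℕ} (hk : k ≠ 0) :
    N ^ (2 * Nat.log 2 k + 1) ≤ 2 * N * k ^ (2 * N) :=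
  calc N ^ (2 * Nat.log 2 k + 1) = N * ((N ^ Nat.log 2 k) ^ 2) := by ring
    _ ≤ N * (((2 ^ N) ^ Nat.log 2 k) ^ 2) := by
      gcongr
      exact Nat.lt_two_pow_self.le
    _ = N * ((2 ^ Nat.log 2 k) ^ N) ^ 2 := by ring
    _ ≤ 2 * N * k ^ (2 * N) := by
      grw [Nat.pow_log_le_self 2 hk, ← pow_mul, mul_comm N 2]
      linarith [Nat.zero_le (N * k ^ (2 * N))]

theorem quasinorm_multi_triangle_general (C : ℝ≥0∞) (hCtop : C ≠ ⊤) :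
    ∃ C' : ℝ, 0 < C' ∧
      ∀ (X : Type u) [AddCommGroup X] [Module ℝ X] (nn : X → ℝ≥0∞),
        (∀ (a : ℝ) (v : X), nn (a • v) = (‖a‖₊ : ℝ≥0∞) * nn v) →
        (∀ v w : X, nn (v + w) ≤ C * (nn v + nn w)) →
        ∀ (K : ℕ) (v : ℕ → X),
          nn (∑ k ∈ Finset.Icc 1 K, v k) ≤
            ENNReal.ofReal C' * ∑ k ∈ Finset.Icc 1 K, (k : ℝ≥0∞) ^ C' * nn (v k) := by
  obtain ⟨N, hN⟩ := ENNReal.exists_nat_gt hCtop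
  have hN0 : 0 < N := by exact_mod_cast pos_of_gt hN
  refine ⟨(2 * N : ℕ), by positivity, fun X _ _ nn hH hQ K v => ?_⟩
  simp only [ENNReal.ofReal_natCast, ENNReal.rpow_natCast, mul_sum, ← mul_assoc]
  grw [quasi_sum_Icc_le_sum_pow_log (by simpa using hH 0 0) hQ K v]
  gcongr with k hk
  calc C ^ (2 * Nat.log 2 k + 1) ≤ (N : ℝ≥0∞) ^ (2 * Nat.log 2 k + 1) := by grw [hN.le]
    _ ≤ ((2 * N : ℕ) : ℝ≥0∞) * (k : ℝ≥0∞) ^ (2 * N) := by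
      exact_mod_cast pow_two_mul_log_add_one_le (by grind)

/-- For every quasi-norm `nn` on a vector space `X` with quasi-triangle
constant `C ≥ 1`, there is a constant `C'` depending only on `C` such that for every `K`,
`‖∑_{k=1}^K v_k‖ ≤ C' ∑_{k=1}^K k^{C'} ‖v_k‖`. -/
theorem quasinorm_multi_triangle (C : ℝ≥0∞) (hC : 1 ≤ C) (hCtop : C ≠ ⊤) :
    ∃ C' : ℝ, 0 < C' ∧
      ∀ (X : Type u) [AddCommGroup X] [Module ℝ X] (nn : X → ℝ≥0∞),
        (∀ (a : ℝ) (v : X), nn (a • v) = (‖a‖₊ : ℝ≥0∞) * nn v) →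
        (∀ v w : X, nn (v + w) ≤ C * (nn v + nn w)) →
        ∀ (K : ℕ) (v : ℕ → X),
          nn (∑ k ∈ Finset.Icc 1 K, v k) ≤
            ENNReal.ofReal C' * ∑ k ∈ Finset.Icc 1 K, (k : ℝ≥0∞) ^ C' * nn (v k) :=
  quasinorm_multi_triangle_general C hCtop
end

section
/- Outer Hölder inequality: let Π be an M-linear map between outer Lebesgue spaces satisfying the size Hölder bound ‖Π(F₁,…,F_M)‖_{S₀} ≤ C ∏_{j=1}^M ‖F_j‖_{S_j} and the support bound μ₀(‖Π(F₁,…,F_M)‖_{S₀} > 0) ≤ min_j μ_j(‖F_j‖_{S_j} > 0). Then for all (p₁,…,p_M) ∈ (0,∞]^M and p₀ with 1/p₀ = ∑_j 1/p_j, one has ‖Π(F₁,…,F_M)‖_{L^{p₀}_{μ₀} S₀} ≲ C ∏_{j=1}^M ‖F_j‖_{L^{p_j}_{μ_j} S_j}. -/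
open MeasureTheory
open scoped ENNReal NNReal

universe u

/-- Countable unions of elements of the generating collection `B`. -/
def BUnionSets {X : Type u} (B : Set (Set X)) : Set (Set X) :=
  {E | ∃ f : ℕ → Set X, (∀ n, f n ∈ B) ∧ E = ⋃ n, f n}

/-- `(X, B, μ)` is an outer space: `B` is a σ-generating collection of sets of finite
outer measure whose coverings recover `μ`. -/
structure IsOuterSpace {X : Type u} (B : Set (Set X)) (μ : OuterMeasure X) : Prop where
  covers : ∃ f : ℕ → Set X, (∀ n, f n ∈ B) ∧ ⋃ n, f n = Set.univ
  finite : ∀ A ∈ B, μ A ≠ ⊤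
  recover : ∀ E : Set X,
    μ E = ⨅ (f : ℕ → Set X) (_ : ∀ n, f n ∈ B) (_ : E ⊆ ⋃ n, f n), ∑' n, μ (f n)

/-- `S` is a size with quasi-triangle constant `C`: a homogeneous quasi-norm on
functions, monotone under restriction to complements of countable unions of
generating sets. -/
structure IsSizeWith {X : Type u} (C : ℝ≥0∞) (B : Set (Set X))
    (S : (X → ℂ) → ℝ≥0∞) : Prop where
  tri : ∀ F G : X → ℂ, S (F + G) ≤ C * (S F + S G)
  homog : ∀ (c : ℂ) (F : X → ℂ), S (fun x => c * F x) = (‖c‖₊ : ℝ≥0∞) * S F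
  mono : ∀ (F : X → ℂ) (E : Set X), E ∈ BUnionSets B → S (Set.indicator Eᶜ F) ≤ S F

/-- The super-level measure `μ(‖F‖_S > λ)`. -/
noncomputable def slm {X : Type u} (μ : OuterMeasure X) (B : Set (Set X))
    (S : (X → ℂ) → ℝ≥0∞) (F : X → ℂ) (lam : ℝ≥0∞) : ℝ≥0∞ :=
  ⨅ (E : Set X) (_ : E ∈ BUnionSets B) (_ : S (Set.indicator Eᶜ F) ≤ lam), μ E

/-- The outer Lebesgue quasi-norm `‖F‖_{L^p_μ S}` for `p ∈ (0,∞)`. -/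
noncomputable def oLp {X : Type u} (μ : OuterMeasure X) (B : Set (Set X))
    (S : (X → ℂ) → ℝ≥0∞) (p : ℝ) (F : X → ℂ) : ℝ≥0∞ :=
  (∫⁻ lam in Set.Ioi (0 : ℝ), slm μ B S F (ENNReal.ofReal lam ^ (1 / p))) ^ (1 / p)

/-- The weak outer Lebesgue quasi-norm `‖F‖_{L^{p,∞}_μ S}` for `p ∈ (0,∞)`. -/
noncomputable def oLpW {X : Type u} (μ : OuterMeasure X) (B : Set (Set X))
    (S : (X → ℂ) → ℝ≥0∞) (p : ℝ) (F : X → ℂ) : ℝ≥0∞ :=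
  (⨆ (lam : ℝ) (_ : 0 < lam),
    ENNReal.ofReal lam * slm μ B S F (ENNReal.ofReal lam ^ (1 / p))) ^ (1 / p)

/-- Outer Lebesgue quasi-norm with exponent `p ∈ (0,∞]` (with `‖F‖_{L^∞_μ S} = S F`). -/
noncomputable def oLpE {X : Type u} (μ : OuterMeasure X) (B : Set (Set X))
    (S : (X → ℂ) → ℝ≥0∞) (p : ℝ≥0∞) (F : X → ℂ) : ℝ≥0∞ :=
  if p = ⊤ then S F else oLp μ B S p.toReal F

/-- Weak outer Lebesgue quasi-norm with exponent `p ∈ (0,∞]`. -/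
noncomputable def oLpWE {X : Type u} (μ : OuterMeasure X) (B : Set (Set X))
    (S : (X → ℂ) → ℝ≥0∞) (p : ℝ≥0∞) (F : X → ℂ) : ℝ≥0∞ :=
  if p = ⊤ then S F else oLpW μ B S p.toReal F

/-!
Split each `F j` as `E.indicator (F j) + Eᶜ.indicator (F j)`, where `E` almost realizes the
super-level measure of `F j` at a level `λ j`, and expand `T F` one slot at a time. A term with
an `E.indicator (F j)` slot lives, by the support bound, on a set of measure at most `μ j E`;
the last term has size at most `C ∏ λ j` by the size bound. With the quasi-triangle inequality,
`μ₀(‖T F‖ > CS ^ M C ∏ λ j) ≤ ∑ j, μ j(‖F j‖ > λ j)`.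
Take `λ j = ‖F j‖_{L^{p j}} (t / β) ^ (1 / p j)`: since `∑ 1 / p j = 1 / p₀` the product of the
levels is a constant times `t ^ (1 / p₀)`, and integrating in `t`, each term on the right
contributes exactly `β`. If some `‖F j‖` vanishes, the support bound alone confines `T F` to
sets of arbitrarily small measure.
-/

theorem Antitone.ofReal_mul_le_setLIntegral_Ioi {g : ℝ → ℝ≥0∞} (hg : Antitone g) (t : ℝ) :
    ENNReal.ofReal t * g t ≤ ∫⁻ s in Set.Ioi 0, g s :=
  calc ENNReal.ofReal t * g t = ∫⁻ _ in Set.Ioc 0 t, g t := by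
        rw [setLIntegral_const, Real.volume_Ioc, sub_zero, mul_comm]
    _ ≤ ∫⁻ s in Set.Ioc 0 t, g s := setLIntegral_mono' measurableSet_Ioc fun s hs => hg hs.2
    _ ≤ ∫⁻ s in Set.Ioi 0, g s := lintegral_mono_set Set.Ioc_subset_Ioi_self

theorem lintegral_Ioi_comp_mul_left {g : ℝ → ℝ≥0∞} (hg : Measurable g) {a : ℝ} (ha : 0 < a) :
    ∫⁻ t in Set.Ioi 0, g (a * t) = ENNReal.ofReal a⁻¹ * ∫⁻ t in Set.Ioi 0, g t := by
  have hpre : (a * ·) ⁻¹' Set.Ioi (0 : ℝ) = Set.Ioi 0 := by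
    ext t; simp [mul_pos_iff_of_pos_left ha]
  rw [← hpre, ← setLIntegral_map measurableSet_Ioi hg (measurable_const_mul a),
    Real.map_volume_mul_left ha.ne', Measure.restrict_smul, lintegral_smul_measure, smul_eq_mul,
    abs_of_pos (inv_pos.2 ha), hpre]

theorem ENNReal.rpow_sum_of_nonneg {ι : Type*} (x : ℝ≥0∞) {s : Finset ι} {e : ι → ℝ}
    (he : ∀ i ∈ s, 0 ≤ e i) : x ^ (∑ i ∈ s, e i) = ∏ i ∈ s, x ^ e i := by
  classical
  induction s using Finset.induction_on with
  | empty => simp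
  | insert a s ha ih =>
    rw [Finset.sum_insert ha, Finset.prod_insert ha,
      ENNReal.rpow_add_of_nonneg _ _ (he a (Finset.mem_insert_self a s))
        (Finset.sum_nonneg fun i hi => he i (Finset.mem_insert_of_mem hi)),
      ih fun i hi => he i (Finset.mem_insert_of_mem hi)]

section Size

variable {X : Type u} {B : Set (Set X)} {μ : OuterMeasure X} {S : (X → ℂ) → ℝ≥0∞}
  {CS : ℝ≥0∞}

theorem BUnionSets.iUnion_mem {ι : Sort*} [Countable ι] [Nonempty ι] {D : ι → Set X}
    (hD : ∀ i, D i ∈ BUnionSets B) : (⋃ i, D i) ∈ BUnionSets B := by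
  obtain ⟨e, he⟩ := exists_surjective_nat ι
  choose f hf hDf using hD
  refine ⟨fun k => f (e k.unpair.1) k.unpair.2, fun k => hf _ _, ?_⟩
  rw [Set.iUnion_unpair (fun n m => f (e n) m), he.iUnion_comp (fun i => ⋃ m, f i m)]
  exact Set.iUnion_congr hDf

theorem BUnionSets.union_mem {E₁ E₂ : Set X} (h₁ : E₁ ∈ BUnionSets B)
    (h₂ : E₂ ∈ BUnionSets B) : E₁ ∪ E₂ ∈ BUnionSets B := by
  rw [Set.union_eq_iUnion]
  exact BUnionSets.iUnion_mem (Bool.forall_bool.2 ⟨h₂, h₁⟩)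

theorem IsSizeWith.map_zero (hS : IsSizeWith CS B S) : S 0 = 0 := by
  have h := hS.homog 0 0
  simp only [zero_mul, nnnorm_zero, ENNReal.coe_zero] at h
  exact h

theorem IsSizeWith.indicator_compl_anti (hS : IsSizeWith CS B S) {A D : Set X} (hAD : A ⊆ D)
    (hD : D ∈ BUnionSets B) (F : X → ℂ) : S (Dᶜ.indicator F) ≤ S (Aᶜ.indicator F) := by
  simpa [Set.indicator_indicator, Set.inter_eq_self_of_subset_left
    (Set.compl_subset_compl.2 hAD)] using hS.mono (Aᶜ.indicator F) D hD

theorem slm_antitone (F : X → ℂ) : Antitone (slm μ B S F) :=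
  fun _ _ h => iInf₂_mono fun _ _ => iInf_mono' fun hl => ⟨hl.trans h, le_rfl⟩

theorem slm_le_measure {E : Set X} {F : X → ℂ} {lam : ℝ≥0∞} (hE : E ∈ BUnionSets B)
    (h : S (Eᶜ.indicator F) ≤ lam) : slm μ B S F lam ≤ μ E :=
  iInf₂_le_of_le E hE (iInf_le _ h)

theorem exists_mem_of_slm_lt {F : X → ℂ} {lam r : ℝ≥0∞} (h : slm μ B S F lam < r) :
    ∃ E ∈ BUnionSets B, S (Eᶜ.indicator F) ≤ lam ∧ μ E < r := by
  simpa only [slm, iInf_lt_iff, exists_prop] using h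

theorem slm_eq_zero_of_le (hB : IsOuterSpace B μ) (hS : IsSizeWith CS B S) {F : X → ℂ}
    {lam : ℝ≥0∞} (h : S F ≤ lam) : slm μ B S F lam = 0 := by
  refine nonpos_iff_eq_zero.1 ?_
  calc slm μ B S F lam
      ≤ ⨅ (f : ℕ → Set X) (_ : ∀ n, f n ∈ B) (_ : ∅ ⊆ ⋃ n, f n), ∑' n, μ (f n) :=
        le_iInf₂ fun f hf => le_iInf fun _ =>
          (slm_le_measure ⟨f, hf, rfl⟩ ((hS.mono F _ ⟨f, hf, rfl⟩).trans h)).trans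
            (measure_iUnion_le f)
    _ = 0 := by rw [← hB.recover ∅, measure_empty]

theorem slm_indicator_le (hS : IsSizeWith CS B S) {E : Set X} (hE : E ∈ BUnionSets B)
    (F : X → ℂ) : slm μ B S (E.indicator F) 0 ≤ μ E :=
  slm_le_measure hE (by simp [Set.indicator_indicator]; exact hS.map_zero)

theorem slm_add_le (hS : IsSizeWith CS B S) (F G : X → ℂ) (l₁ l₂ : ℝ≥0∞) :
    slm μ B S (F + G) (CS * (l₁ + l₂)) ≤ slm μ B S F l₁ + slm μ B S G l₂ := by
  simp only [slm, ENNReal.iInf_add, ENNReal.add_iInf]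
  refine le_iInf₂ fun E₂ hE₂ => le_iInf fun h₂ => le_iInf₂ fun E₁ hE₁ => le_iInf fun h₁ => ?_
  have hE := BUnionSets.union_mem hE₁ hE₂
  refine iInf₂_le_of_le _ hE (iInf_le_of_le ?_ (measure_union_le E₁ E₂))
  rw [Set.indicator_add']
  refine (hS.tri _ _).trans ?_
  gcongr
  · exact (hS.indicator_compl_anti Set.subset_union_left hE F).trans h₁
  · exact (hS.indicator_compl_anti Set.subset_union_right hE G).trans h₂

theorem slm_zero_eq_zero_of_forall_pos (hS : IsSizeWith CS B S) {F : X → ℂ}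
    (h : ∀ lam, 0 < lam → slm μ B S F lam = 0) : slm μ B S F 0 = 0 := by
  refine nonpos_iff_eq_zero.1 (le_of_forall_gt_imp_ge_of_dense fun ε hε => ?_)
  obtain ⟨δ, hδ, hδε⟩ := ENNReal.exists_pos_sum_of_countable hε.ne' ℕ
  have hE : ∀ k : ℕ, ∃ E ∈ BUnionSets B, S (Eᶜ.indicator F) ≤ (k : ℝ≥0∞)⁻¹ ∧ μ E < δ k :=
    fun k => exists_mem_of_slm_lt <| by
      rw [h _ (ENNReal.inv_pos.2 (ENNReal.natCast_ne_top k))]; exact_mod_cast hδ k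
  choose E hEB hES hEμ using hE
  have hU := BUnionSets.iUnion_mem hEB
  have hS0 : S ((⋃ k, E k)ᶜ.indicator F) ≤ 0 := by
    refine le_of_not_gt fun hpos => ?_
    obtain ⟨n, hn⟩ := ENNReal.exists_inv_nat_lt hpos.ne'
    exact (hS.indicator_compl_anti (Set.subset_iUnion E n) hU F |>.trans (hES n)).not_gt hn
  calc slm μ B S F 0 ≤ μ (⋃ k, E k) := slm_le_measure hU hS0
    _ ≤ ∑' k, μ (E k) := measure_iUnion_le E
    _ ≤ ∑' k, (δ k : ℝ≥0∞) := ENNReal.tsum_le_tsum fun k => (hEμ k).le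
    _ ≤ ε := hδε.le

end Size

section Lebesgue

variable {X : Type u} {B : Set (Set X)} {μ : OuterMeasure X} {S : (X → ℂ) → ℝ≥0∞}
  {CS : ℝ≥0∞} {F : X → ℂ} {r : ℝ}

theorem slm_rpow_antitone (F : X → ℂ) (hr : 0 ≤ r) :
    Antitone fun t : ℝ => slm μ B S F (ENNReal.ofReal t ^ r) :=
  fun _ _ h => slm_antitone F (ENNReal.rpow_le_rpow (ENNReal.ofReal_le_ofReal h) hr)

theorem oLp_rpow (hr : r ≠ 0) :
    oLp μ B S r F ^ r = ∫⁻ t in Set.Ioi 0, slm μ B S F (ENNReal.ofReal t ^ (1 / r)) := by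
  rw [oLp, one_div, ENNReal.rpow_inv_rpow hr]

theorem slm_eq_zero_of_oLp_eq_zero (hr : 0 < r) (h : oLp μ B S r F = 0) {lam : ℝ≥0∞}
    (hlam : 0 < lam) : slm μ B S F lam = 0 := by
  have hm0 : min lam 1 ≠ 0 := (lt_min hlam one_pos).ne'
  have hm : min lam 1 ^ r ≠ ⊤ := ENNReal.rpow_ne_top_of_nonneg hr.le (by simp)
  set t := (min lam 1 ^ r).toReal
  have ht : ENNReal.ofReal t = min lam 1 ^ r := ENNReal.ofReal_toReal hm
  have hmarkov := (slm_rpow_antitone (μ := μ) (B := B) (S := S) F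
    (one_div_nonneg.2 hr.le)).ofReal_mul_le_setLIntegral_Ioi t
  rw [← oLp_rpow hr.ne', h, ENNReal.zero_rpow_of_pos hr, nonpos_iff_eq_zero, mul_eq_zero, ht,
    one_div, ENNReal.rpow_rpow_inv hr.ne'] at hmarkov
  refine nonpos_iff_eq_zero.1 ((slm_antitone F (min_le_left lam 1)).trans ?_)
  exact (hmarkov.resolve_left (by simp [hm0, hr])).le

theorem oLp_eq_zero_of_slm_zero_eq_zero (hr : 0 < r) (h : slm μ B S F 0 = 0) :
    oLp μ B S r F = 0 := by
  have h' : ∀ lam, slm μ B S F lam = 0 := fun lam =>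
    nonpos_iff_eq_zero.1 (h ▸ slm_antitone F (zero_le))
  simp [oLp, h', hr]

theorem slm_zero_eq_zero_of_oLpE_eq_zero (hB : IsOuterSpace B μ) (hS : IsSizeWith CS B S)
    {p : ℝ≥0∞} (hp : 0 < p) (h : oLpE μ B S p F = 0) : slm μ B S F 0 = 0 := by
  unfold oLpE at h
  split_ifs at h with hp_top
  · exact slm_eq_zero_of_le hB hS h.le
  · exact slm_zero_eq_zero_of_forall_pos hS fun _ =>
      slm_eq_zero_of_oLp_eq_zero (ENNReal.toReal_pos hp.ne' hp_top) h

theorem lintegral_slm_mul_rpow (hr : 0 < r) {a : ℝ≥0∞} (ha0 : a ≠ 0) (hatop : a ≠ ⊤) :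
    ∫⁻ t in Set.Ioi 0, slm μ B S F ((a * ENNReal.ofReal t) ^ (1 / r)) =
      a⁻¹ * oLp μ B S r F ^ r := by
  have ha := ENNReal.toReal_pos ha0 hatop
  have hmul (t : ℝ) : a * ENNReal.ofReal t = ENNReal.ofReal (a.toReal * t) := by
    rw [ENNReal.ofReal_mul ha.le, ENNReal.ofReal_toReal hatop]
  simp_rw [hmul]
  rw [lintegral_Ioi_comp_mul_left (slm_rpow_antitone F (one_div_nonneg.2 hr.le)).measurable ha,
    oLp_rpow hr.ne', ENNReal.ofReal_inv_of_pos ha, ENNReal.ofReal_toReal hatop]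

theorem lintegral_slm_oLp_mul_rpow_div (hr : 0 < r) (h0 : oLp μ B S r F ≠ 0)
    (htop : oLp μ B S r F ≠ ⊤) {β : ℝ≥0∞} (hβ0 : β ≠ 0) (hβtop : β ≠ ⊤) :
    ∫⁻ t in Set.Ioi 0, slm μ B S F (oLp μ B S r F * (ENNReal.ofReal t / β) ^ (1 / r)) = β := by
  set ν := oLp μ B S r F
  have hνr0 : ν ^ r ≠ 0 := (ENNReal.rpow_pos (pos_iff_ne_zero.2 h0) htop).ne'
  have hνrtop : ν ^ r ≠ ⊤ := ENNReal.rpow_ne_top_of_nonneg hr.le htop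
  have hlevel (t : ℝ) : ν * (ENNReal.ofReal t / β) ^ (1 / r) =
      (ν ^ r / β * ENNReal.ofReal t) ^ (1 / r) := by
    rw [show ν ^ r / β * ENNReal.ofReal t = ν ^ r * (ENNReal.ofReal t / β) by
        simp only [div_eq_mul_inv]; ring, ENNReal.mul_rpow_of_nonneg _ _ (one_div_nonneg.2 hr.le),
      one_div, ENNReal.rpow_rpow_inv hr.ne']
  simp_rw [hlevel]
  rw [lintegral_slm_mul_rpow hr (ENNReal.div_ne_zero.2 ⟨hνr0, hβtop⟩)
    (ENNReal.div_ne_top hνrtop hβ0), ENNReal.inv_div (Or.inl hβtop) (Or.inl hβ0),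
    ENNReal.div_mul_cancel hνr0 hνrtop]

end Lebesgue

section Multilinear

variable {ι : Type*} [DecidableEq ι] {X₀ : Type u} {Xf : ι → Type u}
  {μ₀ : OuterMeasure X₀} {B₀ : Set (Set X₀)} {S₀ : (X₀ → ℂ) → ℝ≥0∞}
  {μf : ∀ j, OuterMeasure (Xf j)} {Bf : ∀ j, Set (Set (Xf j))}
  {Sf : ∀ j, (Xf j → ℂ) → ℝ≥0∞} {CS C : ℝ≥0∞}
  {T : MultilinearMap ℂ (fun j => Xf j → ℂ) (X₀ → ℂ)}

theorem slm_map_le_add (hS₀ : IsSizeWith CS B₀ S₀) (hSf : ∀ j, IsSizeWith CS (Bf j) (Sf j))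
    (hsupp : ∀ F : (∀ j, Xf j → ℂ),
      slm μ₀ B₀ S₀ (T F) 0 ≤ ⨅ j, slm (μf j) (Bf j) (Sf j) (F j) 0)
    (F : ∀ j, Xf j → ℂ) (j : ι) {lam ℓ R : ℝ≥0∞}
    (h : ∀ E ∈ BUnionSets (Bf j), Sf j (Eᶜ.indicator (F j)) ≤ lam →
      slm μ₀ B₀ S₀ (T (Function.update F j (Eᶜ.indicator (F j)))) ℓ ≤ R) :
    slm μ₀ B₀ S₀ (T F) (CS * ℓ) ≤ slm (μf j) (Bf j) (Sf j) (F j) lam + R := by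
  have hRHS : slm (μf j) (Bf j) (Sf j) (F j) lam + R = ⨅ (E) (_ : E ∈ BUnionSets (Bf j))
      (_ : Sf j (Eᶜ.indicator (F j)) ≤ lam), μf j E + R := by
    simp only [slm, ENNReal.iInf_add]
  rw [hRHS]
  refine le_iInf₂ fun E hE => le_iInf fun hlam => ?_
  have hsplit : T F = T (Function.update F j (E.indicator (F j))) +
      T (Function.update F j (Eᶜ.indicator (F j))) := by
    rw [← T.map_update_add, Set.indicator_self_add_compl, Function.update_eq_self]
  rw [hsplit, ← zero_add ℓ]
  refine (slm_add_le hS₀ _ _ 0 ℓ).trans (add_le_add ?_ (h E hE hlam))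
  calc slm μ₀ B₀ S₀ (T (Function.update F j (E.indicator (F j)))) 0
      ≤ slm (μf j) (Bf j) (Sf j) (E.indicator (F j)) 0 :=
        (hsupp _).trans ((iInf_le _ j).trans_eq (by rw [Function.update_self]))
    _ ≤ μf j E := slm_indicator_le (hSf j) hE _

theorem slm_map_zero_eq_zero [Fintype ι] (h₀ : IsOuterSpace B₀ μ₀) (hS₀ : IsSizeWith CS B₀ S₀)
    (hSf : ∀ j, IsSizeWith CS (Bf j) (Sf j))
    (hsize : ∀ F : (∀ j, Xf j → ℂ), S₀ (T F) ≤ C * ∏ j, Sf j (F j))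
    (hsupp : ∀ F : (∀ j, Xf j → ℂ),
      slm μ₀ B₀ S₀ (T F) 0 ≤ ⨅ j, slm (μf j) (Bf j) (Sf j) (F j) 0)
    (F : ∀ j, Xf j → ℂ) (j : ι) (hj : slm (μf j) (Bf j) (Sf j) (F j) 0 = 0) :
    slm μ₀ B₀ S₀ (T F) 0 = 0 := by
  have hsize_zero : ∀ E : Set (Xf j), Sf j (Eᶜ.indicator (F j)) ≤ 0 →
      S₀ (T (Function.update F j (Eᶜ.indicator (F j)))) ≤ 0 := fun E hE => by
    refine (hsize _).trans_eq ?_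
    rw [Finset.prod_eq_zero (Finset.mem_univ j) (nonpos_iff_eq_zero.1 <| by
      rwa [Function.update_self]), mul_zero]
  have := slm_map_le_add (lam := 0) (ℓ := 0) (R := 0) hS₀ hSf hsupp F j fun E _ hE =>
    (slm_eq_zero_of_le h₀ hS₀ (hsize_zero E hE)).le
  simpa [hj] using this

theorem slm_map_le_sum [Fintype ι] (h₀ : IsOuterSpace B₀ μ₀) (hS₀ : IsSizeWith CS B₀ S₀)
    (hSf : ∀ j, IsSizeWith CS (Bf j) (Sf j))
    (hsize : ∀ F : (∀ j, Xf j → ℂ), S₀ (T F) ≤ C * ∏ j, Sf j (F j))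
    (hsupp : ∀ F : (∀ j, Xf j → ℂ),
      slm μ₀ B₀ S₀ (T F) 0 ≤ ⨅ j, slm (μf j) (Bf j) (Sf j) (F j) 0)
    (J : Finset ι) (lam : ι → ℝ≥0∞) (F : ∀ j, Xf j → ℂ) (hF : ∀ j ∉ J, Sf j (F j) ≤ lam j) :
    slm μ₀ B₀ S₀ (T F) (CS ^ J.card * (C * ∏ j, lam j)) ≤
      ∑ j ∈ J, slm (μf j) (Bf j) (Sf j) (F j) (lam j) := by
  induction J using Finset.induction_on generalizing F with
  | empty =>
    rw [Finset.card_empty, pow_zero, one_mul, Finset.sum_empty,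
      slm_eq_zero_of_le h₀ hS₀ ((hsize F).trans (by gcongr with j; exact hF j (by simp)))]
  | insert a J ha ih =>
    rw [Finset.card_insert_of_notMem ha, pow_succ', mul_assoc, Finset.sum_insert ha]
    refine slm_map_le_add hS₀ hSf hsupp F a fun E _ hE => ?_
    have hupdate : ∀ j ≠ a, Function.update F a (Eᶜ.indicator (F a)) j = F j :=
      fun j hja => Function.update_of_ne hja _ _
    refine (ih _ fun j hj => ?_).trans_eq (Finset.sum_congr rfl fun j hj => ?_)
    · rcases eq_or_ne j a with rfl | hja
      · rwa [Function.update_self]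
      · rw [hupdate j hja]
        exact hF j (by simp [hja, hj])
    · rw [hupdate j (ne_of_mem_of_not_mem hj ha)]

theorem slm_map_le_sum_rpow [Fintype ι] (h₀ : IsOuterSpace B₀ μ₀) (hS₀ : IsSizeWith CS B₀ S₀)
    (hSf : ∀ j, IsSizeWith CS (Bf j) (Sf j))
    (hsize : ∀ F : (∀ j, Xf j → ℂ), S₀ (T F) ≤ C * ∏ j, Sf j (F j))
    (hsupp : ∀ F : (∀ j, Xf j → ℂ),
      slm μ₀ B₀ S₀ (T F) 0 ≤ ⨅ j, slm (μf j) (Bf j) (Sf j) (F j) 0)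
    (J : Finset ι) {r : ι → ℝ} (hr : ∀ j, 0 ≤ r j) (hrJ : ∀ j ∉ J, r j = 0)
    (F : ∀ j, Xf j → ℂ) (ν : ι → ℝ≥0∞) (hν : ∀ j ∉ J, Sf j (F j) ≤ ν j) (y : ℝ≥0∞) :
    slm μ₀ B₀ S₀ (T F) (CS ^ J.card * C * (∏ j, ν j) * y ^ ∑ j, 1 / r j) ≤
      ∑ j ∈ J, slm (μf j) (Bf j) (Sf j) (F j) (ν j * y ^ (1 / r j)) := by
  have hlevel : CS ^ J.card * C * (∏ j, ν j) * y ^ ∑ j, 1 / r j =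
      CS ^ J.card * (C * ∏ j, ν j * y ^ (1 / r j)) := by
    rw [Finset.prod_mul_distrib,
      ENNReal.rpow_sum_of_nonneg y fun j _ => one_div_nonneg.2 (hr j)]
    ring
  rw [hlevel]
  exact slm_map_le_sum h₀ hS₀ hSf hsize hsupp J _ F fun j hj => by simpa [hrJ j hj] using hν j hj

theorem oLp_map_le_of_ne_zero_of_ne_top [Fintype ι] (h₀ : IsOuterSpace B₀ μ₀)
    (hS₀ : IsSizeWith CS B₀ S₀) (hSf : ∀ j, IsSizeWith CS (Bf j) (Sf j))
    (hsize : ∀ F : (∀ j, Xf j → ℂ), S₀ (T F) ≤ C * ∏ j, Sf j (F j))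
    (hsupp : ∀ F : (∀ j, Xf j → ℂ),
      slm μ₀ B₀ S₀ (T F) 0 ≤ ⨅ j, slm (μf j) (Bf j) (Sf j) (F j) 0)
    (hCS : 1 ≤ CS) (hCStop : CS ≠ ⊤) (hC0 : C ≠ 0) (hCtop : C ≠ ⊤)
    {p : ι → ℝ≥0∞} (hp : ∀ j, 0 < p j) (hq : ∑ j, (p j)⁻¹ ≠ 0) (F : ∀ j, Xf j → ℂ)
    (hν0 : ∀ j, oLpE (μf j) (Bf j) (Sf j) (p j) (F j) ≠ 0)
    (hνtop : ∀ j, oLpE (μf j) (Bf j) (Sf j) (p j) (F j) ≠ ⊤) :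
    oLp μ₀ B₀ S₀ (∑ j, (p j)⁻¹)⁻¹.toReal (T F) ≤
      (Fintype.card ι : ℝ≥0∞) ^ (∑ j, (p j)⁻¹).toReal * CS ^ Fintype.card ι * C *
        ∏ j, oLpE (μf j) (Bf j) (Sf j) (p j) (F j) := by
  set ν : ι → ℝ≥0∞ := fun j => oLpE (μf j) (Bf j) (Sf j) (p j) (F j)
  set q := (∑ j, (p j)⁻¹).toReal
  set J := Finset.univ.filter fun j => p j ≠ ⊤
  have hinv : ∀ j, (p j)⁻¹ ≠ ⊤ := fun j => ENNReal.inv_ne_top.2 (hp j).ne'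
  have hq_pos : 0 < q := ENNReal.toReal_pos hq (ENNReal.sum_ne_top.2 fun j _ => hinv j)
  -- `1 / (p j).toReal = 0` when `p j = ⊤`, so this sum may run over all `j`
  have hqsum : ∑ j, 1 / (p j).toReal = q := by
    simp only [q, ENNReal.toReal_sum fun j _ => hinv j, ENNReal.toReal_inv, one_div]
  have hνJ : ∀ j ∈ J, ν j = oLp (μf j) (Bf j) (Sf j) (p j).toReal (F j) := fun j hj =>
    if_neg (Finset.mem_filter.1 hj).2
  have hBc0 : CS ^ J.card * C * ∏ j, ν j ≠ 0 :=
    mul_ne_zero (mul_ne_zero (pow_ne_zero _ (one_pos.trans_le hCS).ne') hC0)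
      (Finset.prod_ne_zero_iff.2 fun j _ => hν0 j)
  have hBctop : CS ^ J.card * C * ∏ j, ν j ≠ ⊤ :=
    ENNReal.mul_ne_top (ENNReal.mul_ne_top (ENNReal.pow_ne_top hCStop) hCtop)
      (ENNReal.prod_ne_top fun j _ => hνtop j)
  obtain ⟨β, hβ0, hβtop, hβq⟩ : ∃ β : ℝ≥0∞, β ≠ 0 ∧ β ≠ ⊤ ∧ β ^ q = CS ^ J.card * C * ∏ j, ν j :=
    ⟨_, (ENNReal.rpow_pos (pos_iff_ne_zero.2 hBc0) hBctop).ne',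
      ENNReal.rpow_ne_top_of_nonneg (inv_nonneg.2 hq_pos.le) hBctop,
      ENNReal.rpow_inv_rpow hq_pos.ne' _⟩
  have hpoint (t : ℝ) : slm μ₀ B₀ S₀ (T F) (ENNReal.ofReal t ^ q) ≤ ∑ j ∈ J,
      slm (μf j) (Bf j) (Sf j) (F j) (ν j * (ENNReal.ofReal t / β) ^ (1 / (p j).toReal)) := by
    have := slm_map_le_sum_rpow h₀ hS₀ hSf hsize hsupp J (r := fun j => (p j).toReal)
      (fun j => ENNReal.toReal_nonneg) (fun j hj => by simp_all [J]) F ν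
      (fun j hj => by simp_all [J, ν, oLpE]) (ENNReal.ofReal t / β)
    rwa [hqsum, ENNReal.div_rpow_of_nonneg _ _ hq_pos.le, hβq,
      ENNReal.mul_div_cancel hBc0 hBctop] at this
  have hmeas : ∀ j ∈ J, Measurable fun t : ℝ =>
      slm (μf j) (Bf j) (Sf j) (F j) (ν j * (ENNReal.ofReal t / β) ^ (1 / (p j).toReal)) :=
    fun j _ => Antitone.measurable fun s t hst => slm_antitone _ (by gcongr)
  have hint : ∀ j ∈ J, ∫⁻ t in Set.Ioi 0,
      slm (μf j) (Bf j) (Sf j) (F j) (ν j * (ENNReal.ofReal t / β) ^ (1 / (p j).toReal)) = β :=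
    fun j hj => by
      have hpj := ENNReal.toReal_pos (hp j).ne' (Finset.mem_filter.1 hj).2
      have h0 : ν j ≠ 0 := hν0 j
      have htop : ν j ≠ ⊤ := hνtop j
      rw [hνJ j hj] at h0 htop ⊢
      exact lintegral_slm_oLp_mul_rpow_div hpj h0 htop hβ0 hβtop
  calc oLp μ₀ B₀ S₀ (∑ j, (p j)⁻¹)⁻¹.toReal (T F)
      = (∫⁻ t in Set.Ioi 0, slm μ₀ B₀ S₀ (T F) (ENNReal.ofReal t ^ q)) ^ q := by
        rw [oLp, ENNReal.toReal_inv, one_div, inv_inv]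
    _ ≤ (∫⁻ t in Set.Ioi 0, ∑ j ∈ J, slm (μf j) (Bf j) (Sf j) (F j)
          (ν j * (ENNReal.ofReal t / β) ^ (1 / (p j).toReal))) ^ q := by
        gcongr with t
        exact hpoint t
    _ = (J.card * β) ^ q := by
        rw [lintegral_finsetSum _ hmeas, Finset.sum_congr rfl hint, Finset.sum_const,
          nsmul_eq_mul]
    _ = (J.card : ℝ≥0∞) ^ q * CS ^ J.card * C * ∏ j, ν j := by
        rw [ENNReal.mul_rpow_of_nonneg _ _ hq_pos.le, hβq, mul_assoc, mul_assoc, mul_assoc]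
    _ ≤ (Fintype.card ι : ℝ≥0∞) ^ q * CS ^ Fintype.card ι * C * ∏ j, ν j := by
        gcongr <;> exact Finset.card_le_univ J

theorem oLp_map_le [Fintype ι] (h₀ : IsOuterSpace B₀ μ₀) (hS₀ : IsSizeWith CS B₀ S₀)
    (hf : ∀ j, IsOuterSpace (Bf j) (μf j)) (hSf : ∀ j, IsSizeWith CS (Bf j) (Sf j))
    (hsize : ∀ F : (∀ j, Xf j → ℂ), S₀ (T F) ≤ C * ∏ j, Sf j (F j))
    (hsupp : ∀ F : (∀ j, Xf j → ℂ),
      slm μ₀ B₀ S₀ (T F) 0 ≤ ⨅ j, slm (μf j) (Bf j) (Sf j) (F j) 0)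
    (hCS : 1 ≤ CS) (hCStop : CS ≠ ⊤) {p : ι → ℝ≥0∞} (hp : ∀ j, 0 < p j)
    (hq : ∑ j, (p j)⁻¹ ≠ 0) (F : ∀ j, Xf j → ℂ) :
    oLp μ₀ B₀ S₀ (∑ j, (p j)⁻¹)⁻¹.toReal (T F) ≤
      (Fintype.card ι : ℝ≥0∞) ^ (∑ j, (p j)⁻¹).toReal * CS ^ Fintype.card ι * C *
        ∏ j, oLpE (μf j) (Bf j) (Sf j) (p j) (F j) := by
  have hq_pos : 0 < (∑ j, (p j)⁻¹).toReal := ENNReal.toReal_pos hq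
    (ENNReal.sum_ne_top.2 fun j _ => ENNReal.inv_ne_top.2 (hp j).ne')
  by_cases hzero : slm μ₀ B₀ S₀ (T F) 0 = 0
  · rw [oLp_eq_zero_of_slm_zero_eq_zero (by simpa using hq_pos) hzero]
    exact zero_le
  have hν0 : ∀ j, oLpE (μf j) (Bf j) (Sf j) (p j) (F j) ≠ 0 := fun j hj =>
    hzero (slm_map_zero_eq_zero h₀ hS₀ hSf hsize hsupp F j
      (slm_zero_eq_zero_of_oLpE_eq_zero (hf j) (hSf j) (hp j) hj))
  have hC0 : C ≠ 0 := fun hC =>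
    hzero (slm_eq_zero_of_le h₀ hS₀ ((hsize F).trans_eq (by rw [hC, zero_mul])))
  by_cases htop : C = ⊤ ∨ ∃ j, oLpE (μf j) (Bf j) (Sf j) (p j) (F j) = ⊤
  · obtain ⟨j, -, -⟩ := Finset.exists_ne_zero_of_sum_ne_zero hq
    have hK0 : (Fintype.card ι : ℝ≥0∞) ^ (∑ j, (p j)⁻¹).toReal * CS ^ Fintype.card ι ≠ 0 :=
      mul_ne_zero (ENNReal.rpow_pos (by simpa using Fintype.card_pos_iff.2 ⟨j⟩) (by simp)).ne'
        (pow_ne_zero _ (one_pos.trans_le hCS).ne')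
    refine le_top.trans_eq (Eq.symm ?_)
    rcases htop with hC | ⟨j, hj⟩
    · rw [hC, ENNReal.mul_top hK0, ENNReal.top_mul (Finset.prod_ne_zero_iff.2 fun j _ => hν0 j)]
    · have hprod : ∏ j, oLpE (μf j) (Bf j) (Sf j) (p j) (F j) = ⊤ :=
        WithTop.prod_eq_top (Finset.mem_univ j) hj fun j _ => hν0 j
      rw [hprod, ENNReal.mul_top (mul_ne_zero hK0 hC0)]
  simp only [not_or, not_exists] at htop
  exact oLp_map_le_of_ne_zero_of_ne_top h₀ hS₀ hSf hsize hsupp hCS hCStop hC0 htop.1 hp hq F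
    hν0 htop.2

end Multilinear

/-- outer Hölder inequality for an `M`-linear map between outer
Lebesgue spaces. -/
theorem outer_holder (M : ℕ) (p : Fin M → ℝ≥0∞) (hp : ∀ j, 0 < p j)
    (CS : ℝ≥0∞) (hCS : 1 ≤ CS) (hCStop : CS ≠ ⊤) :
    ∃ K : ℝ≥0∞, 0 < K ∧ K ≠ ⊤ ∧
      ∀ (X₀ : Type u) (Xf : Fin M → Type u)
        (μ₀ : OuterMeasure X₀) (B₀ : Set (Set X₀)) (S₀ : (X₀ → ℂ) → ℝ≥0∞)
        (μf : ∀ j, OuterMeasure (Xf j)) (Bf : ∀ j, Set (Set (Xf j)))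
        (Sf : ∀ j, (Xf j → ℂ) → ℝ≥0∞),
        IsOuterSpace B₀ μ₀ → IsSizeWith CS B₀ S₀ →
        (∀ j, IsOuterSpace (Bf j) (μf j)) → (∀ j, IsSizeWith CS (Bf j) (Sf j)) →
        ∀ (T : MultilinearMap ℂ (fun j => Xf j → ℂ) (X₀ → ℂ)) (C : ℝ≥0∞),
          (∀ F : (∀ j, Xf j → ℂ), S₀ (T F) ≤ C * ∏ j, Sf j (F j)) →
          (∀ F : (∀ j, Xf j → ℂ),
            slm μ₀ B₀ S₀ (T F) 0 ≤ ⨅ j, slm (μf j) (Bf j) (Sf j) (F j) 0) →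
          ∀ F : (∀ j, Xf j → ℂ),
            oLpE μ₀ B₀ S₀ (∑ j, (p j)⁻¹)⁻¹ (T F) ≤
              K * C * ∏ j, oLpE (μf j) (Bf j) (Sf j) (p j) (F j) := by
  have hM : 1 ≤ ((M : ℝ≥0∞) + 1) ^ (∑ j, (p j)⁻¹).toReal := by
    simpa using ENNReal.rpow_le_rpow (le_add_self : (1 : ℝ≥0∞) ≤ M + 1) ENNReal.toReal_nonneg
  have hK : 1 ≤ ((M : ℝ≥0∞) + 1) ^ (∑ j, (p j)⁻¹).toReal * CS ^ M :=
    one_le_mul hM (one_le_pow₀ hCS)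
  refine ⟨_, one_pos.trans_le hK, ENNReal.mul_ne_top (ENNReal.rpow_ne_top_of_nonneg
    ENNReal.toReal_nonneg (by simp)) (ENNReal.pow_ne_top hCStop), ?_⟩
  intro X₀ Xf μ₀ B₀ S₀ μf Bf Sf h₀ hS₀ hf hSf T C hsize hsupp F
  by_cases hq : ∑ j, (p j)⁻¹ = 0
  · have hp_top : ∀ j, p j = ⊤ := by simpa using hq
    have hR : ∏ j, oLpE (μf j) (Bf j) (Sf j) (p j) (F j) = ∏ j, Sf j (F j) :=
      Finset.prod_congr rfl fun j _ => if_pos (hp_top j)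
    rw [oLpE, if_pos (by rw [hq, ENNReal.inv_zero]), hR, mul_assoc]
    exact (hsize F).trans (le_mul_of_one_le_left zero_le hK)
  rw [oLpE, if_neg (ENNReal.inv_ne_top.2 hq)]
  refine (oLp_map_le h₀ hS₀ hf hSf hsize hsupp hCS hCStop hp hq F).trans ?_
  rw [Fintype.card_fin]
  gcongr
  exact le_self_add
end

section
/- Tree–strip measure comparison: for every β ∈ (0,1], every countable union of β-strips V and every countable union of trees W, μ¹_Θ(W ∩ V) ≤ 4β^{-1} ν_β(V) μ^∞_Θ(W ∩ V). -/
open MeasureTheory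
open scoped ENNReal

/-- The tree `T_Θ(ξ, x, s) ⊆ ℝ³₊`. -/
def tree (Θ : Set ℝ) (ξ x s : ℝ) : Set (ℝ × ℝ × ℝ) :=
  {p | ∃ θ ∈ Θ, ∃ ζ σ : ℝ, |ζ| < 1 ∧ 0 < σ ∧ σ < 1 - |ζ| ∧
        p = (ξ + θ / (s * σ), x + s * ζ, s * σ)}

/-- The `β`-strip `D_β(x, s) = {(η,y,t) : βt < β(s - |y - x|)}` (with `t > 0`). -/
def strip (β x s : ℝ) : Set (ℝ × ℝ × ℝ) :=
  {p | 0 < p.2.2 ∧ β * p.2.2 < β * (s - |p.2.1 - x|)}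

/-- The counting function of a countable collection of trees with tops `c n`. -/
noncomputable def countT (c : ℕ → ℝ × ℝ × ℝ) (z : ℝ) : ℝ≥0∞ :=
  ∑' n, Set.indicator (Metric.ball (c n).2.1 (c n).2.2) (fun _ => (1 : ℝ≥0∞)) z

/-- The counting function of a countable collection of strips with tops `d n`. -/
noncomputable def countD (d : ℕ → ℝ × ℝ) (z : ℝ) : ℝ≥0∞ :=
  ∑' n, Set.indicator (Metric.ball (d n).1 (d n).2) (fun _ => (1 : ℝ≥0∞)) z

/-- The forest outer measure `μ¹_Θ` (the `L¹` norm of the counting function). -/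
noncomputable def mu1 (Θ : Set ℝ) (E : Set (ℝ × ℝ × ℝ)) : ℝ≥0∞ :=
  ⨅ (c : ℕ → ℝ × ℝ × ℝ) (_ : E ⊆ ⋃ n, tree Θ (c n).1 (c n).2.1 (c n).2.2),
    ∫⁻ z : ℝ, countT c z

/-- The forest outer measure `μ^∞_Θ` (the `L^∞` norm of the counting function). -/
noncomputable def muInf (Θ : Set ℝ) (E : Set (ℝ × ℝ × ℝ)) : ℝ≥0∞ :=
  ⨅ (c : ℕ → ℝ × ℝ × ℝ) (_ : E ⊆ ⋃ n, tree Θ (c n).1 (c n).2.1 (c n).2.2),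
    essSup (countT c) volume

/-- The strip outer measure `ν_β`. -/
noncomputable def nuMeasure (β : ℝ) (E : Set (ℝ × ℝ × ℝ)) : ℝ≥0∞ :=
  ⨅ (d : ℕ → ℝ × ℝ) (_ : E ⊆ ⋃ n, strip β (d n).1 (d n).2),
    ∫⁻ z : ℝ, countD d z

/-! For `t > 0`, a point `(η, y, t)` lies in a strip over `B_s(x)` iff
`[y - t, y + t] ⊆ B_s(x)`, and in the tree `T_Θ(ξ, x, s)` iff moreover `η = ξ + θ / t` for some
`θ ∈ Θ`. Hence a tree meets a strip inside the tree over the intersection of their intervals.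
Intersecting a tree cover `(T_n)` of `W ∩ V` with a strip cover `(D_m)` of `V` thus yields a tree
cover of `W ∩ V` with `‖N‖_1 = ∑ₙₘ |I_{T_n} ∩ I_{D_m}| = ∫ N_T N_D ≤ ‖N_T‖_∞ ‖N_D‖_1`, and
taking infima gives the inequality with constant `1 ≤ 4 / β`. The infimum of the products is the
product of the infima except in the `0 · ∞` cases, which are harmless: `‖N_T‖_∞ < 1` forces
`‖N_T‖_1 = 0`, and a nonempty set has positive strip measure. -/

open Metric Set

theorem Real.closedBall_subset_ball_iff {x y s t : ℝ} (ht : 0 ≤ t) :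
    closedBall y t ⊆ ball x s ↔ |y - x| < s - t := by
  rw [Real.closedBall_eq_Icc, Real.ball_eq_Ioo, Icc_subset_Ioo_iff (by linarith), abs_sub_lt_iff]
  constructor <;> rintro ⟨h₁, h₂⟩ <;> constructor <;> linarith

theorem Real.exists_ball_eq_ball_inter_ball (x s x' s' : ℝ) :
    ∃ m r : ℝ, ball m r = ball x s ∩ ball x' s' := by
  refine ⟨(max (x - s) (x' - s') + min (x + s) (x' + s')) / 2,
    (min (x + s) (x' + s') - max (x - s) (x' - s')) / 2, ?_⟩
  rw [Real.ball_eq_Ioo, Real.ball_eq_Ioo, Real.ball_eq_Ioo, Ioo_inter_Ioo]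
  congr 1 <;> ring

theorem lintegral_mul_le_essSup_mul_lintegral {α : Type*} [MeasurableSpace α] {μ : Measure α}
    (f : α → ℝ≥0∞) {g : α → ℝ≥0∞} (hg : AEMeasurable g μ) :
    ∫⁻ x, f x * g x ∂μ ≤ essSup f μ * ∫⁻ x, g x ∂μ := by
  rw [← lintegral_const_mul'' _ hg]
  exact lintegral_mono_ae ((ENNReal.ae_le_essSup f).mono fun x hx => mul_le_mul_left hx _)

theorem ENNReal.le_iInf_mul_iInf_of_imp_eq_zero {ι κ : Type*} {a : ℝ≥0∞} {f : ι → ℝ≥0∞}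
    {g : κ → ℝ≥0∞} (hf : ⨅ i, f i = 0 → a = 0) (hg : ⨅ j, g j = 0 → a = 0)
    (h : ∀ i j, a ≤ f i * g j) : a ≤ (⨅ i, f i) * ⨅ j, g j := by
  rcases eq_or_ne a 0 with rfl | ha
  · exact zero_le
  by_cases hf' : ∃ i, f i ≠ ∞
  · by_cases hg' : ∃ j, g j ≠ ∞
    · exact ENNReal.le_iInf_mul_iInf hf' hg' h
    · push Not at hg'
      rw [iInf_eq_top.2 hg', ENNReal.mul_top (mt hf ha)]
      exact le_top
  · push Not at hf'
    rw [iInf_eq_top.2 hf', ENNReal.top_mul (mt hg ha)]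
    exact le_top

theorem mem_strip_iff {β x s : ℝ} (hβ : 0 < β) {p : ℝ × ℝ × ℝ} :
    p ∈ strip β x s ↔ 0 < p.2.2 ∧ closedBall p.2.1 p.2.2 ⊆ ball x s := by
  simp only [strip, mem_ofPred_eq, mul_lt_mul_iff_right₀ hβ]
  exact and_congr_right fun ht => by rw [Real.closedBall_subset_ball_iff ht.le, lt_sub_comm]

theorem mem_tree_iff_of_pos {Θ : Set ℝ} {ξ x s : ℝ} {p : ℝ × ℝ × ℝ} (ht : 0 < p.2.2) :
    p ∈ tree Θ ξ x s ↔ closedBall p.2.1 p.2.2 ⊆ ball x s ∧ ∃ θ ∈ Θ, p.1 = ξ + θ / p.2.2 := by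
  obtain ⟨η, y, t⟩ := p
  dsimp only at ht ⊢
  rw [Real.closedBall_subset_ball_iff ht.le]
  constructor
  · rintro ⟨θ, hθ, ζ, σ, hζ, hσ, hσζ, h⟩
    simp only [Prod.mk.injEq] at h
    obtain ⟨rfl, rfl, rfl⟩ := h
    have hs : 0 < s := pos_of_mul_pos_left ht hσ.le
    refine ⟨?_, θ, hθ, rfl⟩
    rw [add_sub_cancel_left, abs_mul, abs_of_pos hs]
    nlinarith
  · rintro ⟨hyx, θ, hθ, rfl⟩
    have hs : 0 < s := by linarith [abs_nonneg (y - x)]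
    refine ⟨θ, hθ, (y - x) / s, t / s, ?_, div_pos ht hs, ?_, ?_⟩
    · rw [abs_div, abs_of_pos hs, div_lt_one hs]
      linarith
    · rw [abs_div, abs_of_pos hs, lt_sub_iff_add_lt, ← add_div, div_lt_one hs]
      linarith
    · simp only [mul_div_cancel₀ _ hs.ne', add_sub_cancel]

theorem tree_inter_strip_subset {β : ℝ} (hβ : 0 < β) (Θ : Set ℝ) {ξ x s x' s' m r : ℝ}
    (h : ball x s ∩ ball x' s' ⊆ ball m r) :
    tree Θ ξ x s ∩ strip β x' s' ⊆ tree Θ ξ m r := by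
  rintro p ⟨hT, hD⟩
  obtain ⟨ht, hDball⟩ := (mem_strip_iff hβ).1 hD
  obtain ⟨hTball, hθ⟩ := (mem_tree_iff_of_pos ht).1 hT
  exact (mem_tree_iff_of_pos ht).2 ⟨(subset_inter hTball hDball).trans h, hθ⟩

theorem countT_eq_countD (c : ℕ → ℝ × ℝ × ℝ) : countT c = countD fun n => (c n).2 := rfl

theorem measurable_countD (d : ℕ → ℝ × ℝ) : Measurable (countD d) :=
  Measurable.tsum fun _ => measurable_const.indicator measurableSet_ball

theorem lintegral_countD (d : ℕ → ℝ × ℝ) :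
    ∫⁻ z, countD d z = ∑' n, volume (ball (d n).1 (d n).2) := by
  unfold countD
  rw [lintegral_tsum fun n => (measurable_const.indicator measurableSet_ball).aemeasurable]
  simp only [lintegral_indicator_const measurableSet_ball, one_mul]

theorem lintegral_countD_mul_countD (d d' : ℕ → ℝ × ℝ) :
    ∫⁻ z, countD d z * countD d' z =
      ∑' q : ℕ × ℕ, volume (ball (d q.1).1 (d q.1).2 ∩ ball (d' q.2).1 (d' q.2).2) := by
  have hprod : ∀ z, countD d z * countD d' z = ∑' q : ℕ × ℕ,
      (ball (d q.1).1 (d q.1).2 ∩ ball (d' q.2).1 (d' q.2).2).indicator (fun _ => 1) z := by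
    intro z
    unfold countD
    rw [ENNReal.tsum_prod', ← ENNReal.tsum_mul_right]
    simp only [← ENNReal.tsum_mul_left, ← inter_indicator_mul, mul_one]
  rw [lintegral_congr hprod, lintegral_tsum fun q =>
    (measurable_const.indicator (measurableSet_ball.inter measurableSet_ball)).aemeasurable]
  simp only [lintegral_indicator_const (measurableSet_ball.inter measurableSet_ball), one_mul]

theorem lintegral_countD_eq_zero_of_essSup_lt_one {d : ℕ → ℝ × ℝ}
    (hd : essSup (countD d) volume < 1) : ∫⁻ z, countD d z = 0 := by
  have hnull : volume {z | 1 ≤ countD d z} = 0 := by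
    simpa only [ae_iff, not_lt] using ae_lt_of_essSup_lt hd
  rw [lintegral_countD, ENNReal.tsum_eq_zero]
  refine fun n => measure_mono_null (fun z hz => ?_) hnull
  calc 1 = (ball (d n).1 (d n).2).indicator (fun _ => 1) z :=
        (indicator_of_mem hz (fun _ => (1 : ℝ≥0∞))).symm
    _ ≤ countD d z := ENNReal.le_tsum n

theorem exists_tree_cover_inter_strips {β : ℝ} (hβ : 0 < β) (Θ : Set ℝ)
    (c : ℕ → ℝ × ℝ × ℝ) (d : ℕ → ℝ × ℝ) :
    ∃ c' : ℕ → ℝ × ℝ × ℝ,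
      (⋃ n, tree Θ (c n).1 (c n).2.1 (c n).2.2) ∩ (⋃ m, strip β (d m).1 (d m).2) ⊆
        (⋃ k, tree Θ (c' k).1 (c' k).2.1 (c' k).2.2) ∧
      ∫⁻ z, countT c' z = ∫⁻ z, countT c z * countD d z := by
  choose m r hmr using fun q : ℕ × ℕ =>
    Real.exists_ball_eq_ball_inter_ball (c q.1).2.1 (c q.1).2.2 (d q.2).1 (d q.2).2
  let c' : ℕ × ℕ → ℝ × ℝ × ℝ := fun q => ((c q.1).1, m q, r q)
  refine ⟨fun k => c' (Nat.pairEquiv.symm k), ?_, ?_⟩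
  · rintro p ⟨hpT, hpD⟩
    obtain ⟨n, hn⟩ := mem_iUnion.1 hpT
    obtain ⟨k, hk⟩ := mem_iUnion.1 hpD
    refine mem_iUnion.2 ⟨Nat.pairEquiv (n, k), ?_⟩
    simpa [c'] using tree_inter_strip_subset hβ Θ (hmr (n, k)).ge ⟨hn, hk⟩
  · rw [countT_eq_countD, countT_eq_countD, lintegral_countD, lintegral_countD_mul_countD,
      Nat.pairEquiv.symm.tsum_eq fun q => volume (ball (c' q).2.1 (c' q).2.2)]
    simp only [c', hmr]

theorem mu1_empty (Θ : Set ℝ) : mu1 Θ ∅ = 0 :=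
  le_antisymm ((iInf₂_le (fun _ => (0 : ℝ × ℝ × ℝ)) (empty_subset _)).trans (by simp [countT]))
    zero_le

theorem mu1_eq_zero_of_muInf_eq_zero {Θ : Set ℝ} {E : Set (ℝ × ℝ × ℝ)} (h : muInf Θ E = 0) :
    mu1 Θ E = 0 := by
  obtain ⟨c, hc⟩ := iInf_lt_iff.1 (h.trans_lt zero_lt_one)
  obtain ⟨hEc, hc1⟩ := iInf_lt_iff.1 hc
  refine le_antisymm ?_ zero_le
  calc mu1 Θ E ≤ ∫⁻ z, countT c z := iInf₂_le c hEc
    _ = 0 := lintegral_countD_eq_zero_of_essSup_lt_one hc1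

theorem ofReal_two_mul_le_nuMeasure {β : ℝ} (hβ : 0 < β) {V : Set (ℝ × ℝ × ℝ)}
    {p : ℝ × ℝ × ℝ} (hp : p ∈ V) : ENNReal.ofReal (2 * p.2.2) ≤ nuMeasure β V := by
  refine le_iInf₂ fun d hVd => ?_
  obtain ⟨n, hn⟩ := mem_iUnion.1 (hVd hp)
  obtain ⟨ht, hball⟩ := (mem_strip_iff hβ).1 hn
  have hts : p.2.2 < (d n).2 := by
    linarith [abs_nonneg (p.2.1 - (d n).1), (Real.closedBall_subset_ball_iff ht.le).1 hball]
  calc ENNReal.ofReal (2 * p.2.2) ≤ volume (ball (d n).1 (d n).2) := by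
        rw [Real.volume_ball]
        gcongr
    _ ≤ ∫⁻ z, countD d z := lintegral_countD d ▸ ENNReal.le_tsum n

theorem nuMeasure_ne_zero {β : ℝ} (hβ : 0 < β) {V : Set (ℝ × ℝ × ℝ)} (hV : V.Nonempty) :
    nuMeasure β V ≠ 0 := by
  obtain ⟨p, hp⟩ := hV
  intro h0
  obtain ⟨d, hd⟩ := iInf_lt_iff.1 (h0.trans_lt zero_lt_one)
  obtain ⟨hVd, -⟩ := iInf_lt_iff.1 hd
  obtain ⟨n, hn⟩ := mem_iUnion.1 (hVd hp)
  have ht : 0 < p.2.2 := ((mem_strip_iff hβ).1 hn).1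
  have h2t := h0 ▸ ofReal_two_mul_le_nuMeasure hβ hp
  rw [nonpos_iff_eq_zero, ENNReal.ofReal_eq_zero] at h2t
  linarith

theorem mu1_le_muInf_mul_nuMeasure {β : ℝ} (hβ : 0 < β) (Θ : Set ℝ) {E V : Set (ℝ × ℝ × ℝ)}
    (hEV : E ⊆ V) : mu1 Θ E ≤ muInf Θ E * nuMeasure β V := by
  have key := ENNReal.le_iInf_mul_iInf_of_imp_eq_zero (a := mu1 Θ E)
    (f := fun c : {c : ℕ → ℝ × ℝ × ℝ // E ⊆ ⋃ n, tree Θ (c n).1 (c n).2.1 (c n).2.2} =>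
      essSup (countT c.1) volume)
    (g := fun d : {d : ℕ → ℝ × ℝ // V ⊆ ⋃ n, strip β (d n).1 (d n).2} => ∫⁻ z, countD d.1 z)
  rw [muInf, nuMeasure, iInf_subtype', iInf_subtype']
  refine key (fun h0 => mu1_eq_zero_of_muInf_eq_zero (by rwa [muInf, iInf_subtype']))
    (fun h0 => ?_) fun ⟨c, hEc⟩ ⟨d, hVd⟩ => ?_
  · rcases E.eq_empty_or_nonempty with rfl | hE
    · exact mu1_empty Θ
    · exact absurd (by rwa [nuMeasure, iInf_subtype']) (nuMeasure_ne_zero hβ (hE.mono hEV))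
  · obtain ⟨c', hc', hint⟩ := exists_tree_cover_inter_strips hβ Θ c d
    calc mu1 Θ E ≤ ∫⁻ z, countT c' z := iInf₂_le c' fun p hp => hc' ⟨hEc hp, hVd (hEV hp)⟩
      _ = ∫⁻ z, countT c z * countD d z := hint
      _ ≤ essSup (countT c) volume * ∫⁻ z, countD d z :=
        lintegral_mul_le_essSup_mul_lintegral _ (measurable_countD d).aemeasurable

theorem tree_strip_measure_comparison_general (β : ℝ) (hβ : β ∈ Set.Ioc (0:ℝ) 1)
    (Θ : Set ℝ) (V W : Set (ℝ × ℝ × ℝ)) :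
    mu1 Θ (W ∩ V) ≤ ENNReal.ofReal (4 / β) * nuMeasure β V * muInf Θ (W ∩ V) := by
  obtain ⟨hβ0, hβ1⟩ := hβ
  have hconst : 1 ≤ ENNReal.ofReal (4 / β) := by
    rw [← ENNReal.ofReal_one]
    exact ENNReal.ofReal_le_ofReal ((one_le_div hβ0).2 (by linarith))
  calc mu1 Θ (W ∩ V) ≤ muInf Θ (W ∩ V) * nuMeasure β V :=
        mu1_le_muInf_mul_nuMeasure hβ0 Θ inter_subset_right
    _ = 1 * nuMeasure β V * muInf Θ (W ∩ V) := by ring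
    _ ≤ ENNReal.ofReal (4 / β) * nuMeasure β V * muInf Θ (W ∩ V) := by gcongr

/-- tree–strip measure comparison:
`μ¹_Θ(W ∩ V) ≤ 4 β⁻¹ ν_β(V) μ^∞_Θ(W ∩ V)`. -/
theorem tree_strip_measure_comparison (β : ℝ) (hβ : β ∈ Set.Ioc (0:ℝ) 1)
    (Θ : Set ℝ) (V W : Set (ℝ × ℝ × ℝ))
    (hV : ∃ d : ℕ → ℝ × ℝ, V = ⋃ n, strip β (d n).1 (d n).2)
    (hW : ∃ c : ℕ → ℝ × ℝ × ℝ, W = ⋃ n, tree Θ (c n).1 (c n).2.1 (c n).2.2) :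
    mu1 Θ (W ∩ V) ≤ ENNReal.ofReal (4 / β) * nuMeasure β V * muInf Θ (W ∩ V) :=
  tree_strip_measure_comparison_general β hβ Θ V W
end

section
/- Boundary structure of generating sets: let V be a countable union of β-strips, W₁,…,W_k countable unions of trees, and E = V ∩ (∩ W_l) or E = V ∪ (∪ W_l). Then there is a locally Lipschitz function b_E: ℝ² → [0,∞] such that E = {(η,y,t) ∈ ℝ³₊ : 0 < t < b_E(η,y)}, and b_E satisfies |∂_y b_E(η,y)| ≤ β^{-1} and b_E(η,y)/(-θ₊) ≤ ∂_η b_E(η,y)/b_E(η,y) ≤ b_E(η,y)/(-θ₋), where Θ = (θ₋, θ₊). -/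
open MeasureTheory
open scoped ENNReal

/-!
Write each generating set as the region `0 < t < b(η, y)` below a boundary function `b`: a
countable union of regions is the region below the pointwise supremum of their boundaries, and a
finite intersection the region below the infimum. Both conditions on `b` are integrated, one-sided
Lipschitz bounds, so they survive arbitrary suprema and infima; for the `η`-condition this is
because it is a condition on `b⁻¹` and inversion exchanges suprema and infima. It therefore
suffices to check them on a single strip, bounded by `s - |y - x|`, and on a single tree, bounded
by the minimum of `s - |y - x|` and the cone bound `θ± / (η - ξ)`, whose reciprocal is a maximum
of two affine functions of `η` with slopes `1 / θp > 0 > 1 / θm`.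
-/

lemma ENNReal.ofReal_lt_inv_ofReal_iff {t : ℝ} (ht : 0 ≤ t) (a : ℝ) :
    ENNReal.ofReal t < (ENNReal.ofReal a)⁻¹ ↔ t * a < 1 := by
  rw [← one_div, ENNReal.lt_div_iff_mul_lt (.inr ENNReal.ofReal_ne_top)
    (.inl ENNReal.ofReal_ne_top), ← ENNReal.ofReal_mul ht, ENNReal.ofReal_lt_one]

lemma ENNReal.ofReal_le_ofReal_add {u v w : ℝ} (h : u ≤ v + w) :
    ENNReal.ofReal u ≤ ENNReal.ofReal v + ENNReal.ofReal w :=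
  (ENNReal.ofReal_le_ofReal h).trans ENNReal.ofReal_add_le

namespace BoundaryStructure

def regionBelow (b : ℝ → ℝ → ℝ≥0∞) : Set (ℝ × ℝ × ℝ) :=
  {p | 0 < p.2.2 ∧ ENNReal.ofReal p.2.2 < b p.1 p.2.1}

lemma regionBelow_iSup {ι : Sort*} (b : ι → ℝ → ℝ → ℝ≥0∞) :
    regionBelow (⨆ i, b i) = ⋃ i, regionBelow (b i) := by
  ext p
  simp only [regionBelow, iSup_apply, lt_iSup_iff, Set.mem_iUnion, Set.mem_ofPred_eq,
    exists_and_left]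

lemma regionBelow_sup (b₁ b₂ : ℝ → ℝ → ℝ≥0∞) :
    regionBelow (b₁ ⊔ b₂) = regionBelow b₁ ∪ regionBelow b₂ := by
  ext p
  simp only [regionBelow, Pi.sup_apply, lt_max_iff, Set.mem_union, Set.mem_ofPred_eq, and_or_left]

lemma regionBelow_inf_iInf {ι : Type*} [Fintype ι] (b : ℝ → ℝ → ℝ≥0∞)
    (c : ι → ℝ → ℝ → ℝ≥0∞) :
    regionBelow (b ⊓ ⨅ i, c i) = regionBelow b ∩ ⋂ i, regionBelow (c i) := by
  ext ⟨η, y, t⟩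
  have lt_iInf : ENNReal.ofReal t < (⨅ i, c i) η y ↔ ∀ i, ENNReal.ofReal t < c i η y := by
    simp only [iInf_apply, ← Finset.inf_univ_eq_iInf, Finset.lt_inf_iff ENNReal.ofReal_lt_top,
      Finset.mem_univ, true_implies]
  simp only [regionBelow, Pi.inf_apply, lt_min_iff, lt_iInf, Set.mem_inter_iff, Set.mem_iInter,
    Set.mem_ofPred_eq]
  exact ⟨fun ⟨ht, hb, hc⟩ => ⟨⟨ht, hb⟩, fun i => ⟨ht, hc i⟩⟩,
    fun ⟨⟨ht, hb⟩, hc⟩ => ⟨ht, hb, fun i => (hc i).2⟩⟩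

def YLipschitz (K : ℝ) (b : ℝ → ℝ → ℝ≥0∞) : Prop :=
  ∀ η y y' : ℝ, b η y ≤ b η y' + ENNReal.ofReal (K * |y - y'|)

/-- Integrated form of `1 / θm ≤ ∂_η (b⁻¹) ≤ 1 / θp`, i.e. of
`b / (-θp) ≤ ∂_η b / b ≤ b / (-θm)`. -/
def InvSlopeBounded (θm θp : ℝ) (b : ℝ → ℝ → ℝ≥0∞) : Prop :=
  ∀ y η η' : ℝ, η ≤ η' →
    (b η' y)⁻¹ ≤ (b η y)⁻¹ + ENNReal.ofReal ((η' - η) / θp) ∧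
    (b η y)⁻¹ ≤ (b η' y)⁻¹ + ENNReal.ofReal ((η' - η) / (-θm))

section Closure

variable {ι : Sort*} {K θm θp : ℝ} {b₁ b₂ : ℝ → ℝ → ℝ≥0∞} {b : ι → ℝ → ℝ → ℝ≥0∞}

lemma YLipschitz.iSup (h : ∀ i, YLipschitz K (b i)) : YLipschitz K (⨆ i, b i) := by
  intro η y y'
  simp only [iSup_apply]
  exact iSup_le fun i => (h i η y y').trans (add_le_add_left (le_iSup (b · η y') i) _)

lemma YLipschitz.iInf (h : ∀ i, YLipschitz K (b i)) : YLipschitz K (⨅ i, b i) := by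
  intro η y y'
  simp only [iInf_apply, ENNReal.iInf_add]
  exact iInf_mono fun i => h i η y y'

lemma YLipschitz.sup (h₁ : YLipschitz K b₁) (h₂ : YLipschitz K b₂) :
    YLipschitz K (b₁ ⊔ b₂) := by
  rw [sup_eq_iSup]
  exact .iSup fun i => by cases i <;> assumption

lemma YLipschitz.inf (h₁ : YLipschitz K b₁) (h₂ : YLipschitz K b₂) :
    YLipschitz K (b₁ ⊓ b₂) := by
  rw [inf_eq_iInf]
  exact .iInf fun i => by cases i <;> assumption

lemma InvSlopeBounded.iSup (h : ∀ i, InvSlopeBounded θm θp (b i)) :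
    InvSlopeBounded θm θp (⨆ i, b i) := by
  intro y η η' hη
  simp only [iSup_apply, ENNReal.inv_iSup, ENNReal.iInf_add]
  exact ⟨iInf_mono fun i => (h i y η η' hη).1, iInf_mono fun i => (h i y η η' hη).2⟩

lemma InvSlopeBounded.iInf (h : ∀ i, InvSlopeBounded θm θp (b i)) :
    InvSlopeBounded θm θp (⨅ i, b i) := by
  intro y η η' hη
  simp only [iInf_apply, ENNReal.inv_iInf]
  exact ⟨iSup_le fun i => (h i y η η' hη).1.trans
      (add_le_add_left (le_iSup (fun j => (b j η y)⁻¹) i) _),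
    iSup_le fun i => (h i y η η' hη).2.trans
      (add_le_add_left (le_iSup (fun j => (b j η' y)⁻¹) i) _)⟩

lemma InvSlopeBounded.sup (h₁ : InvSlopeBounded θm θp b₁) (h₂ : InvSlopeBounded θm θp b₂) :
    InvSlopeBounded θm θp (b₁ ⊔ b₂) := by
  rw [sup_eq_iSup]
  exact .iSup fun i => by cases i <;> assumption

lemma InvSlopeBounded.inf (h₁ : InvSlopeBounded θm θp b₁) (h₂ : InvSlopeBounded θm θp b₂) :
    InvSlopeBounded θm θp (b₁ ⊓ b₂) := by
  rw [inf_eq_iInf]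
  exact .iInf fun i => by cases i <;> assumption

end Closure

def stripBound (x s : ℝ) : ℝ → ℝ → ℝ≥0∞ := fun _ y => ENNReal.ofReal (s - |y - x|)

lemma strip_eq_regionBelow {β : ℝ} (hβ : 0 < β) (x s : ℝ) :
    strip β x s = regionBelow (stripBound x s) := by
  ext ⟨η, y, t⟩
  simp only [strip, regionBelow, stripBound, Set.mem_ofPred_eq, mul_lt_mul_iff_right₀ hβ]
  exact and_congr_right fun ht => (ENNReal.ofReal_lt_ofReal_iff_of_nonneg ht.le).symm

lemma yLipschitz_stripBound {K : ℝ} (hK : 1 ≤ K) (x s : ℝ) : YLipschitz K (stripBound x s) := by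
  intro η y y'
  refine ENNReal.ofReal_le_ofReal_add ?_
  have hy : |y' - x| ≤ |y - x| + |y - y'| := by
    linarith [abs_sub_le y' y x, abs_sub_comm y y']
  nlinarith [abs_nonneg (y - y')]

lemma invSlopeBounded_stripBound (θm θp x s : ℝ) : InvSlopeBounded θm θp (stripBound x s) :=
  fun _ _ _ _ => ⟨le_self_add, le_self_add⟩

/-- For `θm < 0 < θp` this is `θp / (η - ξ)` if `η > ξ`, `θm / (η - ξ)` if `η < ξ`, and `⊤` at
`η = ξ`. -/
noncomputable def coneBound (θm θp ξ : ℝ) : ℝ → ℝ → ℝ≥0∞ :=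
  fun η _ => (ENNReal.ofReal (max ((η - ξ) / θp) ((η - ξ) / θm)))⁻¹

lemma ofReal_lt_coneBound_iff {θm θp : ℝ} (hθm : θm < 0) (hθp : 0 < θp) (ξ : ℝ) {t : ℝ}
    (ht : 0 ≤ t) (η y : ℝ) :
    ENNReal.ofReal t < coneBound θm θp ξ η y ↔ (η - ξ) * t ∈ Set.Ioo θm θp := by
  rw [coneBound, ENNReal.ofReal_lt_inv_ofReal_iff ht, mul_max_of_nonneg _ _ ht, max_lt_iff,
    Set.mem_Ioo, ← mul_div_assoc, ← mul_div_assoc, div_lt_one hθp, div_lt_one_of_neg hθm,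
    mul_comm t]
  exact and_comm

lemma invSlopeBounded_coneBound {θm θp : ℝ} (hθm : θm < 0) (hθp : 0 < θp) (ξ : ℝ) :
    InvSlopeBounded θm θp (coneBound θm θp ξ) := by
  intro y η η' hη
  simp only [coneBound, inv_inv]
  have hp : (η' - ξ) / θp = (η - ξ) / θp + (η' - η) / θp := by ring
  have hm : (η - ξ) / θm = (η' - ξ) / θm + (η' - η) / -θm := by ring
  have hp₀ : 0 ≤ (η' - η) / θp := div_nonneg (sub_nonneg.2 hη) hθp.le
  have hm₀ : 0 ≤ (η' - η) / -θm := div_nonneg (sub_nonneg.2 hη) (neg_nonneg.2 hθm.le)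
  constructor <;> refine ENNReal.ofReal_le_ofReal_add (max_le ?_ ?_) <;>
    linarith [le_max_left ((η - ξ) / θp) ((η - ξ) / θm),
      le_max_right ((η - ξ) / θp) ((η - ξ) / θm),
      le_max_left ((η' - ξ) / θp) ((η' - ξ) / θm),
      le_max_right ((η' - ξ) / θp) ((η' - ξ) / θm)]

lemma yLipschitz_coneBound (K θm θp ξ : ℝ) : YLipschitz K (coneBound θm θp ξ) :=
  fun _ _ _ => le_self_add

lemma mem_tree_iff {Θ : Set ℝ} {s : ℝ} (hs : 0 < s) (ξ x η y t : ℝ) :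
    (η, y, t) ∈ tree Θ ξ x s ↔ 0 < t ∧ t < s - |y - x| ∧ (η - ξ) * t ∈ Θ := by
  constructor
  · rintro ⟨θ, hθ, ζ, σ, hζ, hσ₀, hσ₁, heq⟩
    simp only [Prod.mk.injEq] at heq
    obtain ⟨rfl, rfl, rfl⟩ := heq
    have hsσ : 0 < s * σ := mul_pos hs hσ₀
    have hθ' : (ξ + θ / (s * σ) - ξ) * (s * σ) = θ := by field_simp; ring
    rw [add_sub_cancel_left, abs_mul, abs_of_pos hs, hθ']
    exact ⟨hsσ, by nlinarith, hθ⟩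
  · rintro ⟨ht, hts, hΘ⟩
    refine ⟨(η - ξ) * t, hΘ, (y - x) / s, t / s, ?_, div_pos ht hs, ?_, ?_⟩
    · rw [abs_div, abs_of_pos hs, div_lt_one hs]
      linarith
    · rw [abs_div, abs_of_pos hs, lt_sub_iff_add_lt, ← add_div, div_lt_one hs]
      linarith
    · simp only [Prod.mk.injEq]
      refine ⟨?_, ?_, ?_⟩ <;> field_simp <;> ring

noncomputable def treeBound (θm θp ξ x s : ℝ) : ℝ → ℝ → ℝ≥0∞ := stripBound x s ⊓ coneBound θm θp ξ

lemma tree_eq_regionBelow {θm θp s : ℝ} (hθm : θm < 0) (hθp : 0 < θp) (hs : 0 < s)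
    (ξ x : ℝ) : tree (Set.Ioo θm θp) ξ x s = regionBelow (treeBound θm θp ξ x s) := by
  ext ⟨η, y, t⟩
  rw [mem_tree_iff hs]
  simp only [regionBelow, treeBound, stripBound, Pi.inf_apply, lt_min_iff, Set.mem_ofPred_eq]
  refine and_congr_right fun ht => ?_
  rw [ENNReal.ofReal_lt_ofReal_iff_of_nonneg ht.le, ofReal_lt_coneBound_iff hθm hθp ξ ht.le]

lemma yLipschitz_treeBound {K : ℝ} (hK : 1 ≤ K) (θm θp ξ x s : ℝ) :
    YLipschitz K (treeBound θm θp ξ x s) :=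
  (yLipschitz_stripBound hK x s).inf (yLipschitz_coneBound K θm θp ξ)

lemma invSlopeBounded_treeBound {θm θp : ℝ} (hθm : θm < 0) (hθp : 0 < θp) (ξ x s : ℝ) :
    InvSlopeBounded θm θp (treeBound θm θp ξ x s) :=
  (invSlopeBounded_stripBound θm θp x s).inf (invSlopeBounded_coneBound hθm hθp ξ)

end BoundaryStructure

open BoundaryStructure in
/-- boundary structure of generating sets.  If `E` is an intersection
`V ∩ (⋂ W_l)` or union `V ∪ (⋃ W_l)` of a countable union of `β`-strips `V` and
finitely many countable unions of trees `W_l`, then `E` is the open region below the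
graph of a function `b : ℝ² → [0,∞]` satisfying `|∂_y b| ≤ β⁻¹` and
`b/(-θ₊) ≤ ∂_η b / b ≤ b/(-θ₋)` (stated in integrated form). -/
theorem boundary_structure (β θm θp : ℝ) (hβ : β ∈ Set.Ioc (0:ℝ) 1)
    (hθm : θm ≤ -4) (hθp : 4 ≤ θp) (k : ℕ)
    (V : Set (ℝ × ℝ × ℝ)) (W : Fin k → Set (ℝ × ℝ × ℝ))
    (hV : ∃ d : ℕ → ℝ × ℝ, V = ⋃ n, strip β (d n).1 (d n).2)
    (hW : ∀ l, ∃ c : ℕ → ℝ × ℝ × ℝ, (∀ n, 0 < (c n).2.2) ∧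
      W l = ⋃ n, tree (Set.Ioo θm θp) (c n).1 (c n).2.1 (c n).2.2)
    (E : Set (ℝ × ℝ × ℝ))
    (hE : E = V ∩ ⋂ l, W l ∨ E = V ∪ ⋃ l, W l) :
    ∃ b : ℝ → ℝ → ℝ≥0∞,
      E = {p : ℝ × ℝ × ℝ | 0 < p.2.2 ∧ ENNReal.ofReal p.2.2 < b p.1 p.2.1} ∧
      (∀ η y y' : ℝ, b η y ≤ b η y' + ENNReal.ofReal (β⁻¹ * |y - y'|)) ∧
      (∀ y η η' : ℝ, η ≤ η' →
        (b η' y)⁻¹ ≤ (b η y)⁻¹ + ENNReal.ofReal ((η' - η) / θp) ∧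
        (b η y)⁻¹ ≤ (b η' y)⁻¹ + ENNReal.ofReal ((η' - η) / (-θm))) := by
  obtain ⟨hβ₀, hβ₁⟩ := hβ
  have hK : 1 ≤ β⁻¹ := one_le_inv₀ hβ₀ |>.2 hβ₁
  have hθm₀ : θm < 0 := by linarith
  have hθp₀ : 0 < θp := by linarith
  obtain ⟨d, rfl⟩ := hV
  choose c hc hW using hW
  set bV := ⨆ n, stripBound (d n).1 (d n).2
  set bW : Fin k → ℝ → ℝ → ℝ≥0∞ :=
    fun l => ⨆ n, treeBound θm θp (c l n).1 (c l n).2.1 (c l n).2.2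
  have hV : ⋃ n, strip β (d n).1 (d n).2 = regionBelow bV := by
    simp only [bV, regionBelow_iSup, strip_eq_regionBelow hβ₀]
  obtain rfl : W = fun l => regionBelow (bW l) := funext fun l => by
    simp only [hW l, bW, regionBelow_iSup, tree_eq_regionBelow hθm₀ hθp₀ (hc l _)]
  have hLV : YLipschitz β⁻¹ bV := .iSup fun n => yLipschitz_stripBound hK _ _
  have hLW : ∀ l, YLipschitz β⁻¹ (bW l) :=
    fun l => .iSup fun n => yLipschitz_treeBound hK _ _ _ _ _
  have hSV : InvSlopeBounded θm θp bV := .iSup fun n => invSlopeBounded_stripBound _ _ _ _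
  have hSW : ∀ l, InvSlopeBounded θm θp (bW l) :=
    fun l => .iSup fun n => invSlopeBounded_treeBound hθm₀ hθp₀ _ _ _
  rcases hE with rfl | rfl
  · exact ⟨bV ⊓ ⨅ l, bW l, hV ▸ (regionBelow_inf_iInf bV bW).symm, hLV.inf (.iInf hLW),
      hSV.inf (.iInf hSW)⟩
  · exact ⟨bV ⊔ ⨆ l, bW l, by rw [hV, ← regionBelow_iSup, ← regionBelow_sup]; rfl,
      hLV.sup (.iSup hLW), hSV.sup (.iSup hSW)⟩
end
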